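/- If α > 1 is an eigenvalue of A, then the eigenspace {x ∈ W^⊥ : A x = α • x} is one-dimensional, and every eigenvalue β of A with β ≠ α satisfies β < 1; in particular α is the only eigenvalue of A that is ≥ 1, and it has multiplicity 1. -/

import Mathlib

noncomputable section

/-- The Minkowski bilinear form of index 1 on `ℝ^{n+2}`:
`B x y = ∑_{i=0}^{n} x i * y i − x (n+1) * y (n+1)`. -/
def mB (n : ℕ) : (Fin (n+2) → ℝ) →ₗ[ℝ] (Fin (n+2) → ℝ) →ₗ[ℝ] ℝ :=
  LinearMap.mk₂ ℝ
    (fun x y => ∑ i : Fin (n+2), (if (i : ℕ) = n+1 then (-1:ℝ) else 1) * x i * y i)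
    (fun x x' y => by
      rw [← Finset.sum_add_distrib]
      exact Finset.sum_congr rfl fun i _ => by simp only [Pi.add_apply]; ring)
    (fun c x y => by
      rw [smul_eq_mul, Finset.mul_sum]
      exact Finset.sum_congr rfl fun i _ => by simp only [Pi.smul_apply, smul_eq_mul]; ring)
    (fun x y y' => by
      rw [← Finset.sum_add_distrib]
      exact Finset.sum_congr rfl fun i _ => by simp only [Pi.add_apply]; ring)
    (fun c x y => by
      rw [smul_eq_mul, Finset.mul_sum]
      exact Finset.sum_congr rfl fun i _ => by simp only [Pi.smul_apply, smul_eq_mul]; ring)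

/-- The orthogonal complement `S^⊥ = {x | ∀ s ∈ S, B x s = 0}` w.r.t. the Minkowski form. -/
def mperp (n : ℕ) (S : Submodule ℝ (Fin (n+2) → ℝ)) : Submodule ℝ (Fin (n+2) → ℝ) where
  carrier := {x | ∀ s ∈ S, mB n x s = 0}
  zero_mem' := fun s _ => by simp
  add_mem' := fun ha hb s hs => by simp [ha s hs, hb s hs]
  smul_mem' := fun c a ha s hs => by simp [ha s hs]

/-- A subspace is pseudo-euclidean if the Minkowski form restricted to it
is nondegenerate and it contains a timelike vector. -/
def IsPseudoEuclidean (n : ℕ) (S : Submodule ℝ (Fin (n+2) → ℝ)) : Prop :=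
  (∀ x ∈ S, (∀ y ∈ S, mB n x y = 0) → x = 0) ∧ ∃ x ∈ S, mB n x x < 0

lemma mB_apply (n : ℕ) (x y : Fin (n+2) → ℝ) :
    mB n x y = ∑ i : Fin (n+2), (if (i : ℕ) = n+1 then (-1:ℝ) else 1) * x i * y i := rfl

lemma mB_symm (n : ℕ) (x y : Fin (n+2) → ℝ) : mB n x y = mB n y x := by
  rw [mB_apply, mB_apply]
  exact Finset.sum_congr rfl fun i _ => by ring

lemma mB_split (n : ℕ) (x y : Fin (n+2) → ℝ) :
    mB n x y = (∑ i ∈ Finset.univ.erase (Fin.last (n+1)), x i * y i)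
      - x (Fin.last (n+1)) * y (Fin.last (n+1)) := by
  rw [mB_apply, ← Finset.sum_erase_add _ _ (Finset.mem_univ (Fin.last (n+1)))]
  have h1 : ((Fin.last (n+1) : Fin (n+2)) : ℕ) = n+1 := rfl
  rw [if_pos h1]
  have : ∀ i ∈ Finset.univ.erase (Fin.last (n+1)),
      (if (i : ℕ) = n+1 then (-1:ℝ) else 1) * x i * y i = x i * y i := by
    intro i hi
    have : i ≠ Fin.last (n+1) := (Finset.mem_erase.1 hi).1
    rw [if_neg, one_mul]
    intro h
    exact this (Fin.ext h)
  rw [Finset.sum_congr rfl this]; ring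

/-- Index-1 property: the orthogonal complement of a timelike vector is positive definite. -/
lemma timelike_perp_pos (n : ℕ) (u w : Fin (n+2) → ℝ) (hu : mB n u u < 0)
    (huw : mB n u w = 0) (hw : w ≠ 0) : 0 < mB n w w := by
  set L := Fin.last (n+1)
  set s := Finset.univ.erase L
  have hSu : (0:ℝ) ≤ ∑ i ∈ s, u i * u i :=
    Finset.sum_nonneg fun i _ => mul_self_nonneg _
  have hSw : (0:ℝ) ≤ ∑ i ∈ s, w i * w i :=
    Finset.sum_nonneg fun i _ => mul_self_nonneg _
  have huu : (∑ i ∈ s, u i * u i) - u L * u L < 0 := by rw [← mB_split]; exact hu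
  have huw' : (∑ i ∈ s, u i * w i) = u L * w L := by
    have := mB_split n u w; rw [huw] at this; linarith
  have hL2 : 0 < u L * u L := by nlinarith
  by_cases hsw : (∑ i ∈ s, w i * w i) = 0
  · -- all non-last coords of w are zero
    have hzero : ∀ i ∈ s, w i = 0 := by
      intro i hi
      have := (Finset.sum_eq_zero_iff_of_nonneg (fun i _ => mul_self_nonneg (w i))).1 hsw i hi
      nlinarith [this]
    have hcross : (∑ i ∈ s, u i * w i) = 0 :=
      Finset.sum_eq_zero fun i hi => by rw [hzero i hi, mul_zero]
    have hwL : w L = 0 := by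
      rw [hcross] at huw'
      rcases mul_eq_zero.1 huw'.symm with h | h
      · nlinarith
      · exact h
    exfalso; apply hw; funext i
    by_cases hiL : i = L
    · rw [hiL]; exact hwL
    · exact hzero i (Finset.mem_erase.2 ⟨hiL, Finset.mem_univ i⟩)
  · have hSwpos : 0 < ∑ i ∈ s, w i * w i := lt_of_le_of_ne hSw (Ne.symm hsw)
    have hcs := Finset.sum_mul_sq_le_sq_mul_sq s u w
    simp only [sq] at hcs
    -- (u L * w L)^2 ≤ Su * Sw < (uL)^2 * Sw
    have key : u L * u L * (w L * w L) ≤ (∑ i ∈ s, u i * u i) * (∑ i ∈ s, w i * w i) := by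
      rw [show u L * u L * (w L * w L) = (u L * w L) * (u L * w L) by ring, ← huw']
      exact hcs
    have : w L * w L < ∑ i ∈ s, w i * w i := by
      nlinarith
    rw [mB_split n w w]; linarith


lemma mem_mperp (n : ℕ) (S : Submodule ℝ (Fin (n+2) → ℝ)) (x : Fin (n+2) → ℝ) :
    x ∈ mperp n S ↔ ∀ s ∈ S, mB n x s = 0 := Iff.rfl

/-- Nondegeneracy of the Minkowski form on the full space. -/
lemma mB_nondegen (n : ℕ) (x : Fin (n+2) → ℝ) (h : ∀ y, mB n x y = 0) : x = 0 := by
  funext i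
  have := h (Pi.single i 1)
  rw [mB_apply] at this
  rw [Finset.sum_eq_single i] at this
  · by_cases hi : (i : ℕ) = n+1
    · rw [if_pos hi] at this; simp at this; simpa using this
    · rw [if_neg hi] at this; simp at this; simpa using this
  · intro b _ hb
    rw [Pi.single_eq_of_ne hb]; ring
  · intro h; exact absurd (Finset.mem_univ i) h

/-- If `α > 1` is an eigenvalue of `A`, then its eigenspace in `W^⊥` is
one-dimensional and every other eigenvalue of `A` is `< 1`. -/
theorem eigenvalue_gt_one_simple
    (n : ℕ) (hn : 0 < n) (W U : Submodule ℝ (Fin (n+2) → ℝ))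
    (hW : IsPseudoEuclidean n W) (hU : IsPseudoEuclidean n U)
    (hsum : W ⊔ U = ⊤)
    (p p' : (Fin (n+2) → ℝ) →ₗ[ℝ] (Fin (n+2) → ℝ))
    (hp : ∀ x, p x ∈ mperp n U ∧ x - p x ∈ U)
    (hp' : ∀ x, p' x ∈ mperp n W ∧ x - p' x ∈ W)
    (hWtop : W ≠ ⊤) (α : ℝ) (hα : 1 < α)
    (heig : ∃ v ∈ mperp n W, v ≠ 0 ∧ p' (p v) = α • v) :
    Module.finrank ℝ
      ↥(LinearMap.ker (p' ∘ₗ p - α • LinearMap.id) ⊓ mperp n W) = 1 ∧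
    (∀ β : ℝ, (∃ v ∈ mperp n W, v ≠ 0 ∧ p' (p v) = β • v) → β ≠ α → β < 1) := by
  obtain ⟨t, htW, ht⟩ := hW.2
  obtain ⟨v, hvW, hv0, hveig⟩ := heig
  have posW : ∀ x, x ∈ mperp n W → x ≠ 0 → 0 < mB n x x := by
    intro x hx hx0
    exact timelike_perp_pos n t x ht (by rw [mB_symm]; exact hx t htW) hx0
  have perp0 : ∀ x, x ∈ mperp n W → x ∈ mperp n U → x = 0 := by
    intro x hxW hxU
    apply mB_nondegen n x
    intro y
    have hy : y ∈ W ⊔ U := by rw [hsum]; exact Submodule.mem_top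
    obtain ⟨w, hw, u, hu, rfl⟩ := Submodule.mem_sup.1 hy
    rw [map_add, hxW w hw, hxU u hu, add_zero]
  -- bilinear expansion helper
  have expand : ∀ a b c d : Fin (n+2) → ℝ, mB n (a - b) (c - d)
      = mB n a c - mB n a d - mB n b c + mB n b d := by
    intro a b c d
    simp only [map_sub, LinearMap.sub_apply]
    ring
  -- self-adjointness: B(A x, y) = B(p x, p y) on W^⊥
  have key : ∀ x y, x ∈ mperp n W → y ∈ mperp n W →
      mB n (p' (p x)) y = mB n (p x) (p y) := by
    intro x y hx hy
    have hz : mB n (p x - p' (p x)) y = 0 := by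
      rw [mB_symm]; exact hy _ (hp' (p x)).2
    rw [map_sub, LinearMap.sub_apply] at hz
    have h2 : mB n (p x) y - mB n (p x) (p y) = 0 := by
      rw [← map_sub]; exact (hp x).1 _ (hp y).2
    linarith
  -- B(u_y, u_y) = (1 - β) B(y,y) for an eigenvector y
  have unorm : ∀ (β : ℝ) y, y ∈ mperp n W → p' (p y) = β • y →
      mB n (y - p y) (y - p y) = (1 - β) * mB n y y := by
    intro β y hy heq
    have h1 : mB n (p y) (p y) = β * mB n y y := by
      have h := key y y hy hy
      rw [heq, map_smul, LinearMap.smul_apply, smul_eq_mul] at h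
      exact h.symm
    have s2 : mB n (p y) y - mB n (p y) (p y) = 0 := by
      rw [← map_sub]; exact (hp y).1 _ (hp y).2
    have s1 : mB n y (p y) = mB n (p y) y := mB_symm n y (p y)
    rw [expand]
    linarith [s1, s2, h1]
  -- cross orthogonality of the U-components
  have cross : ∀ (β γ : ℝ) x y, x ∈ mperp n W → y ∈ mperp n W →
      p' (p x) = β • x → p' (p y) = γ • y → mB n x y = 0 →
      mB n (x - p x) (y - p y) = 0 := by
    intro β γ x y hx hy hex hey hxy
    have hpp : mB n (p x) (p y) = 0 := by
      have h := key x y hx hy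
      rw [hex, map_smul, LinearMap.smul_apply, smul_eq_mul, hxy, mul_zero] at h
      exact h.symm
    have c1 : mB n (p x) y - mB n (p x) (p y) = 0 := by
      rw [← map_sub]; exact (hp x).1 _ (hp y).2
    have c2 : mB n (p y) x - mB n (p y) (p x) = 0 := by
      rw [← map_sub]; exact (hp y).1 _ (hp x).2
    have s1 : mB n x (p y) = mB n (p y) x := mB_symm n x (p y)
    have s2 : mB n (p x) (p y) = mB n (p y) (p x) := mB_symm n (p x) (p y)
    rw [expand]
    linarith
  have hvv : 0 < mB n v v := posW v hvW hv0
  have huv : mB n (v - p v) (v - p v) < 0 := by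
    rw [unorm α v hvW hveig]
    exact mul_neg_of_neg_of_pos (by linarith) hvv
  -- killer lemma: a second "eigenvector" with eigenvalue ≥ 1, B-orthogonal to v, vanishes
  have klemma : ∀ (β : ℝ) y, y ∈ mperp n W → p' (p y) = β • y → mB n v y = 0 →
      1 ≤ β → y = 0 := by
    intro β y hy hey hvy hβ
    by_contra hy0
    have hyy : 0 < mB n y y := posW y hy hy0
    have huy : mB n (y - p y) (y - p y) ≤ 0 := by
      rw [unorm β y hy hey]
      exact mul_nonpos_of_nonpos_of_nonneg (by linarith) (le_of_lt hyy)
    have hc : mB n (v - p v) (y - p y) = 0 := cross α β v y hvW hy hveig hey hvy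
    have huy0 : y - p y = 0 := by
      by_contra h
      have := timelike_perp_pos n (v - p v) (y - p y) huv hc h
      linarith
    have hyU : y ∈ mperp n U := by
      have : y = p y := sub_eq_zero.1 huy0
      rw [this]; exact (hp y).1
    exact hy0 (perp0 y hy hyU)
  constructor
  · -- the eigenspace is spanned by v
    have hvE : v ∈ LinearMap.ker (p' ∘ₗ p - α • LinearMap.id) ⊓ mperp n W := by
      refine ⟨?_, hvW⟩
      simp only [SetLike.mem_coe, LinearMap.mem_ker, LinearMap.sub_apply, LinearMap.comp_apply, LinearMap.smul_apply,
        LinearMap.id_apply]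
      rw [hveig]; simp
    have hne : mB n v v ≠ 0 := ne_of_gt hvv
    have hle : LinearMap.ker (p' ∘ₗ p - α • LinearMap.id) ⊓ mperp n W
        ≤ Submodule.span ℝ {v} := by
      intro w hw
      obtain ⟨hwk, hwW⟩ := hw
      simp only [SetLike.mem_coe, LinearMap.mem_ker, LinearMap.sub_apply, LinearMap.comp_apply, LinearMap.smul_apply,
        LinearMap.id_apply] at hwk
      have hweig : p' (p w) = α • w := sub_eq_zero.1 hwk
      set c : ℝ := mB n v w / mB n v v with hc
      have hyW : w - c • v ∈ mperp n W :=
        Submodule.sub_mem _ hwW (Submodule.smul_mem _ c hvW)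
      have hyeig : p' (p (w - c • v)) = α • (w - c • v) := by
        simp only [map_sub, map_smul]
        rw [hweig, hveig, smul_sub, smul_smul, smul_smul, mul_comm]
      have hvy : mB n v (w - c • v) = 0 := by
        rw [map_sub, map_smul, smul_eq_mul, hc]
        field_simp
        ring
      have hy0 : w - c • v = 0 := klemma α _ hyW hyeig hvy (le_of_lt hα)
      have : w = c • v := by
        have := sub_eq_zero.1 hy0; exact this
      rw [this]
      exact Submodule.smul_mem _ _ (Submodule.mem_span_singleton_self v)
    have heq : LinearMap.ker (p' ∘ₗ p - α • LinearMap.id) ⊓ mperp n W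
        = Submodule.span ℝ {v} := by
      apply le_antisymm hle
      rw [Submodule.span_le, Set.singleton_subset_iff]
      exact hvE
    rw [heq]
    exact finrank_span_singleton hv0
  · -- every other eigenvalue is < 1
    intro β hβ hβα
    obtain ⟨y, hyW, hy0, hyeig⟩ := hβ
    by_contra h
    push_neg at h
    have h1 := key v y hvW hyW
    rw [hveig, map_smul, LinearMap.smul_apply, smul_eq_mul] at h1
    have h2 := key y v hyW hvW
    rw [hyeig, map_smul, LinearMap.smul_apply, smul_eq_mul] at h2
    have h3 : mB n (p y) (p v) = mB n (p v) (p y) := mB_symm n (p y) (p v)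
    have h4 : mB n y v = mB n v y := mB_symm n y v
    have hz : (β - α) * mB n v y = 0 := by
      linear_combination -h1 + h2 + h3 - β * h4
    have hvy : mB n v y = 0 := by
      rcases mul_eq_zero.1 hz with h' | h'
      · exact absurd (by linarith : β = α) hβα
      · exact h'
    exact hy0 (klemma β y hyW hyeig hvy h)
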